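/- arXiv:1511.01966 — 5 statements merged into one kernel-verified Lean document; each statement's English description precedes it below -/
import Mathlib

section
/- For the partly quadratic penalty φ(x;a) with a > 0, the function s(x;a) := φ(x;a) - |x| is concave on ℝ. -/
/-!
`φ(x; a) - |x| = min_{|t| ≤ 1} (t² / (2a) - t x)`, the minimum being attained at `t = a x` when
`|x| ≤ 1 / a` and at `t = ±1` otherwise. A pointwise minimum of affine functions is concave.
-/

open Set

theorem ConcaveOn.of_forall_le_of_exists_eq {𝕜 E β ι : Type*} [Semiring 𝕜] [PartialOrder 𝕜]
    [AddCommMonoid E] [AddCommMonoid β] [PartialOrder β] [IsOrderedAddMonoid β]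
    [SMul 𝕜 E] [Module 𝕜 β] [PosSMulMono 𝕜 β] {s : Set E} {f : E → β} {g : ι → E → β}
    (hs : Convex 𝕜 s) (hg : ∀ i, ConcaveOn 𝕜 s (g i)) (hle : ∀ i, ∀ x ∈ s, f x ≤ g i x)
    (heq : ∀ x ∈ s, ∃ i, f x = g i x) : ConcaveOn 𝕜 s f := by
  refine ⟨hs, fun x hx y hy α β hα hβ hαβ => ?_⟩
  obtain ⟨i, hi⟩ := heq _ (hs hx hy hα hβ hαβ)
  calc α • f x + β • f y ≤ α • g i x + β • g i y := by
        gcongr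
        exacts [hle i x hx, hle i y hy]
    _ ≤ g i (α • x + β • y) := (hg i).2 hx hy hα hβ hαβ
    _ = f (α • x + β • y) := hi.symm

section PenaltyGap

variable {a : ℝ}

/-- `φ(x; a) - |x|`. -/
noncomputable def penaltyGap (a x : ℝ) : ℝ :=
  if |x| ≤ 1 / a then -(a / 2 * x ^ 2) else 1 / (2 * a) - |x|

theorem penaltyGap_le (ha : 0 < a) {t : ℝ} (ht : |t| ≤ 1) (x : ℝ) :
    penaltyGap a x ≤ t ^ 2 / (2 * a) - t * x := by
  rw [penaltyGap, ← sub_nonneg]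
  split_ifs with hx
  · have : t ^ 2 / (2 * a) - t * x - -(a / 2 * x ^ 2) = (t - a * x) ^ 2 / (2 * a) := by
      field_simp; ring
    rw [this]
    positivity
  · have hx : 1 < a * |x| := by rwa [not_le, div_lt_iff₀' ha] at hx
    have htx : t * x ≤ |t| * |x| := abs_mul t x ▸ le_abs_self _
    -- `t² - 1 + 2a(|x| - t x) ≥ (1 - |t|)(2a|x| - 1 - |t|)`, and `2a|x| > 2`
    have key : 0 ≤ t ^ 2 - 2 * a * (t * x) - 1 + 2 * a * |x| := by
      nlinarith [sq_abs t, mul_nonneg (sub_nonneg.2 ht) (sub_nonneg.2 hx.le), abs_nonneg t]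
    have : t ^ 2 / (2 * a) - t * x - (1 / (2 * a) - |x|)
        = (t ^ 2 - 2 * a * (t * x) - 1 + 2 * a * |x|) / (2 * a) := by
      field_simp; ring
    rw [this]
    exact div_nonneg key (by positivity)

theorem exists_penaltyGap_eq (ha : 0 < a) (x : ℝ) :
    ∃ t : ℝ, |t| ≤ 1 ∧ penaltyGap a x = t ^ 2 / (2 * a) - t * x := by
  rw [penaltyGap]
  split_ifs with hx
  · refine ⟨a * x, ?_, by field_simp; ring⟩
    rwa [abs_mul, abs_of_pos ha, ← le_div_iff₀' ha]
  · rcases le_or_gt 0 x with hx0 | hx0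
    · exact ⟨1, by simp, by rw [abs_of_nonneg hx0]; ring⟩
    · exact ⟨-1, by simp, by rw [abs_of_neg hx0]; ring⟩

theorem concaveOn_penaltyGap (ha : 0 < a) : ConcaveOn ℝ univ (penaltyGap a) :=
  ConcaveOn.of_forall_le_of_exists_eq (g := fun (t : Icc (-1 : ℝ) 1) x => t ^ 2 / (2 * a) - t * x)
    convex_univ
    (fun t => (concaveOn_const _ convex_univ).sub ((LinearMap.mulLeft ℝ _).convexOn convex_univ))
    (fun t x _ => penaltyGap_le ha (abs_le.2 t.2) x)
    (fun x _ => by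
      obtain ⟨t, ht, hx⟩ := exists_penaltyGap_eq ha x
      exact ⟨⟨t, abs_le.1 ht⟩, hx⟩)

end PenaltyGap

theorem stmt_3 (a : ℝ) (ha : 0 < a)
    (φ s : ℝ → ℝ)
    (hφ : ∀ x, φ x = if |x| ≤ 1 / a then |x| - a / 2 * x ^ 2 else 1 / (2 * a))
    (hs : ∀ x, s x = φ x - |x|) :
    ConcaveOn ℝ Set.univ s := by
  have hs_eq : s = penaltyGap a := funext fun x => by
    rw [hs, hφ, penaltyGap]
    split_ifs <;> ring
  exact hs_eq ▸ concaveOn_penaltyGap ha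
end

section
/- Let λ > 0 and 0 < a < 1/λ, and let φ be the partly quadratic penalty. Then the function f(x) = (1/2)x² + λφ(x;a) is strictly convex on ℝ. -/
/-!
Adding `(a/2)x²` to the penalty gives `|x| + (a/2)·((|x| - 1/a)⁺)²`, a convex function; hence
`f = ((1 - λa)/2)x² + λ(|x| + (a/2)((|x| - 1/a)⁺)²)` is a strictly convex quadratic, as `λa < 1`,
plus a convex function.
-/

open Set

lemma StrictConvexOn.const_mul {E : Type*} [AddCommGroup E] [Module ℝ E] {s : Set E} {f : E → ℝ}
    {c : ℝ} (hc : 0 < c) (hf : StrictConvexOn ℝ s f) : StrictConvexOn ℝ s fun x => c * f x := by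
  refine ⟨hf.1, fun x hx y hy hxy μ ν hμ hν hμν => ?_⟩
  have h := mul_lt_mul_of_pos_left (hf.2 hx hy hxy hμ hν hμν) hc
  simp only [smul_eq_mul] at h ⊢
  linarith

lemma convexOn_sq_max_abs_sub (c : ℝ) :
    ConvexOn ℝ univ fun x : ℝ => max (|x| - c) 0 ^ 2 := by
  have hmax : ConvexOn ℝ univ fun x : ℝ => max (|x| - c) 0 :=
    (convexOn_univ_norm.sub (concaveOn_const c convex_univ)).sup (convexOn_const 0 convex_univ)
  exact hmax.pow (fun x _ => le_max_right _ _) 2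

lemma ite_abs_le_eq_abs_add_sq_max {a : ℝ} (ha : a ≠ 0) (x : ℝ) :
    (if |x| ≤ 1 / a then |x| - a / 2 * x ^ 2 else 1 / (2 * a)) =
      |x| + a / 2 * max (|x| - 1 / a) 0 ^ 2 - a / 2 * x ^ 2 := by
  split_ifs with hx
  · rw [max_eq_right (by linarith)]
    ring
  · rw [max_eq_left (by linarith), ← sq_abs x]
    field_simp
    ring

theorem stmt_5 (a lam : ℝ) (ha : 0 < a) (hlam : 0 < lam) (h : a < 1 / lam)
    (φ f : ℝ → ℝ)
    (hφ : ∀ x, φ x = if |x| ≤ 1 / a then |x| - a / 2 * x ^ 2 else 1 / (2 * a))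
    (hf : ∀ x, f x = 1 / 2 * x ^ 2 + lam * φ x) :
    StrictConvexOn ℝ Set.univ f := by
  have hla : 0 < (1 - lam * a) / 2 := by
    have := (lt_div_iff₀ hlam).mp h
    linarith
  have hf_eq : f = fun x => (1 - lam * a) / 2 * x ^ 2 +
      lam * (|x| + a / 2 * max (|x| - 1 / a) 0 ^ 2) := by
    ext x
    rw [hf, hφ, ite_abs_le_eq_abs_add_sq_max ha.ne']
    ring
  have hquad := (Even.strictConvexOn_pow even_two two_ne_zero).const_mul hla
  have hrest := (convexOn_univ_norm.add ((convexOn_sq_max_abs_sub (1 / a)).smul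
    (half_pos ha).le)).smul hlam.le
  rw [hf_eq]
  exact hquad.add_convexOn hrest
end

section
/- Let λ > 0 and 0 < a < 1/λ, and let s(x;a) = φ(x;a) - |x| for the partly quadratic penalty φ. Then g(x) = (1/2)x² + λ·s(x;a) is strictly convex on ℝ. -/
/-!
With `φ(x) = max (|x| - 1/a) 0`, the penalty is `s(x) = -(a/2) x² + (a/2) φ(x)²`, so
`g(x) = ((1 - λa)/2) x² + (λa/2) φ(x)²`: a quadratic with positive leading coefficient
(because `λa < 1`) plus a convex function, since `φ` is convex and nonnegative.
-/

open Set

section StrictConvexSMul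

variable {𝕜 E β : Type*} [CommSemiring 𝕜] [PartialOrder 𝕜] [AddCommMonoid E] [AddCommMonoid β]
  [PartialOrder β] [SMul 𝕜 E] [Module 𝕜 β] [PosSMulStrictMono 𝕜 β] {s : Set E} {f : E → β}

theorem StrictConvexOn.smul {c : 𝕜} (hc : 0 < c) (hf : StrictConvexOn 𝕜 s f) :
    StrictConvexOn 𝕜 s fun x => c • f x :=
  ⟨hf.1, fun x hx y hy hxy a b ha hb hab =>
    calc
      c • f (a • x + b • y) < c • (a • f x + b • f y) :=
        smul_lt_smul_of_pos_left (hf.2 hx hy hxy ha hb hab) hc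
      _ = a • c • f x + b • c • f y := by rw [smul_add, smul_comm c, smul_comm c]⟩

end StrictConvexSMul

theorem convexOn_univ_sq_max_abs_sub_zero (r : ℝ) :
    ConvexOn ℝ univ fun x : ℝ => max (|x| - r) 0 ^ 2 := by
  have hmax : ConvexOn ℝ univ fun x : ℝ => max (|x| - r) 0 :=
    ((convexOn_univ_norm (E := ℝ)).sub (concaveOn_const r convex_univ)).sup
      (convexOn_const 0 convex_univ)
  exact hmax.pow (fun x _ => le_max_right _ _) 2

theorem ite_abs_le_inv_eq_neg_sq_add_sq_max {a : ℝ} (ha : a ≠ 0) (x : ℝ) :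
    (if |x| ≤ 1 / a then -(a / 2) * x ^ 2 else 1 / (2 * a) - |x|) =
      -(a / 2) * x ^ 2 + a / 2 * max (|x| - 1 / a) 0 ^ 2 := by
  split_ifs with hx
  · rw [max_eq_right (by linarith)]
    ring
  · rw [max_eq_left (by linarith), ← sq_abs x]
    field_simp
    ring

theorem stmt_6 (a lam : ℝ) (ha : 0 < a) (hlam : 0 < lam) (h : a < 1 / lam)
    (s g : ℝ → ℝ)
    (hs : ∀ x, s x = if |x| ≤ 1 / a then -(a / 2) * x ^ 2 else 1 / (2 * a) - |x|)
    (hg : ∀ x, g x = 1 / 2 * x ^ 2 + lam * s x) :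
    StrictConvexOn ℝ Set.univ g := by
  have hla : 0 < 1 - lam * a := by
    rw [lt_div_iff₀ hlam] at h
    linarith
  have hg' : g = fun x => (1 - lam * a) / 2 * x ^ 2 + lam * (a / 2 * max (|x| - 1 / a) 0 ^ 2) :=
    funext fun x => by
      rw [hg, hs, ite_abs_le_inv_eq_neg_sq_add_sq_max ha.ne']
      ring
  rw [hg']
  exact ((Even.strictConvexOn_pow even_two two_ne_zero).smul (by positivity)).add_convexOn
    (((convexOn_univ_sq_max_abs_sub_zero (1 / a)).smul (by positivity)).smul hlam.le)
end

section
/- Let λ > 0 and 0 < a < 1/λ, and let φ be the partly quadratic penalty. For each y ∈ ℝ, the firm threshold value x* = Θ(y;λ,a) = sign(y)·min{|y|, max{(|y|-λ)/(1-aλ), 0}} is the unique global minimizer of x ↦ (1/2)(y-x)² + λφ(x;a). -/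
/-!
Writing `c = 1 - aλ > 0`, the penalty satisfies `λ φ(x) ≥ λ (|x| - a x² / 2)` with equality for
`|x| ≤ 1/a`, so the objective is bounded below by `c x² / 2 - y x + λ |x| + y² / 2`, a strongly
convex lasso-type objective whose unique minimizer is the scaled soft threshold
`sign(y) (|y| - λ)₊ / c`. For `|y| ≤ 1/a` this point lies in `[-1/a, 1/a]`, where the two
objectives agree, and it equals the firm threshold. For `|y| > 1/a` the firm threshold is `y`
itself, and the objective exceeds its value `λ / (2a)` there by
`(y - x)² / 2 - (aλ / 2) (1/a - |x|)₊² > 0`.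
-/

noncomputable section

variable {lam a y x : ℝ}

def mcpPenalty (a x : ℝ) : ℝ :=
  if |x| ≤ 1 / a then |x| - a / 2 * x ^ 2 else 1 / (2 * a)

def firmThreshold (lam a y : ℝ) : ℝ :=
  Real.sign y * min |y| (max ((|y| - lam) / (1 - a * lam)) 0)

def mcpObjective (lam a y x : ℝ) : ℝ :=
  1 / 2 * (y - x) ^ 2 + lam * mcpPenalty a x

lemma mcpPenalty_neg (a x : ℝ) : mcpPenalty a (-x) = mcpPenalty a x := by
  simp only [mcpPenalty, abs_neg, neg_sq]

lemma mcpObjective_neg_neg (lam a y x : ℝ) :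
    mcpObjective lam a (-y) (-x) = mcpObjective lam a y x := by
  rw [mcpObjective, mcpObjective, mcpPenalty_neg]
  ring

lemma firmThreshold_neg (lam a y : ℝ) : firmThreshold lam a (-y) = -firmThreshold lam a y := by
  simp only [firmThreshold, Real.sign_neg, abs_neg, neg_mul]

lemma mcpPenalty_of_abs_le (hx : |x| ≤ 1 / a) : mcpPenalty a x = |x| - a / 2 * x ^ 2 :=
  if_pos hx

lemma mcpPenalty_eq_sub_sq (ha : 0 < a) (x : ℝ) :
    mcpPenalty a x = 1 / (2 * a) - a / 2 * max (1 / a - |x|) 0 ^ 2 := by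
  unfold mcpPenalty
  split_ifs with hx
  · rw [max_eq_left (by linarith)]
    field_simp
    rw [← sq_abs x]
    ring
  · rw [max_eq_right (by linarith)]
    ring

lemma abs_sub_le_mcpPenalty (ha : 0 < a) (x : ℝ) : |x| - a / 2 * x ^ 2 ≤ mcpPenalty a x := by
  have hsq : max (1 / a - |x|) 0 ^ 2 ≤ (1 / a - |x|) ^ 2 := by
    rcases le_total (1 / a - |x|) 0 with h | h
    · rw [max_eq_right h, sq, zero_mul]; positivity
    · rw [max_eq_left h]
  have hid : |x| - a / 2 * x ^ 2 = 1 / (2 * a) - a / 2 * (1 / a - |x|) ^ 2 := by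
    field_simp
    rw [← sq_abs x]
    ring
  rw [mcpPenalty_eq_sub_sq ha, hid]
  nlinarith

lemma softThreshold_lt_minorant (hlam : 0 ≤ lam) (hal : a * lam < 1) (hy : 0 ≤ y)
    {T : ℝ} (hT : T = max ((y - lam) / (1 - a * lam)) 0) (hx : x ≠ T) :
    1 / 2 * (y - T) ^ 2 + lam * (|T| - a / 2 * T ^ 2) <
      1 / 2 * (y - x) ^ 2 + lam * (|x| - a / 2 * x ^ 2) := by
  have hc : 0 < 1 - a * lam := by linarith
  have hT0 : 0 ≤ T := hT ▸ le_max_right _ _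
  -- `hopt` is the subgradient optimality condition at `T`; `hid` splits off strong convexity.
  have hopt : 0 ≤ ((1 - a * lam) * T - y) * (x - T) + lam * (|x| - |T|) := by
    rw [abs_of_nonneg hT0]
    rcases le_total y lam with hyl | hly
    · have : T = 0 := by
        rw [hT, max_eq_right (div_nonpos_of_nonpos_of_nonneg (by linarith) hc.le)]
      subst this
      nlinarith [le_abs_self x, abs_nonneg x]
    · have : (1 - a * lam) * T = y - lam := by
        rw [hT, max_eq_left (div_nonneg (by linarith) hc.le), mul_div_cancel₀ _ hc.ne']
      rw [this]
      nlinarith [le_abs_self x]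
  have hgap : 0 < (x - T) ^ 2 := by positivity [sub_ne_zero.mpr hx]
  have hid : 1 / 2 * (y - x) ^ 2 + lam * (|x| - a / 2 * x ^ 2) -
      (1 / 2 * (y - T) ^ 2 + lam * (|T| - a / 2 * T ^ 2)) =
      (1 - a * lam) / 2 * (x - T) ^ 2 +
        (((1 - a * lam) * T - y) * (x - T) + lam * (|x| - |T|)) := by ring
  nlinarith

lemma firmThreshold_of_nonneg (hy : 0 ≤ y) :
    firmThreshold lam a y = min y (max ((y - lam) / (1 - a * lam)) 0) := by
  rcases hy.eq_or_lt with rfl | hy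
  · simp [firmThreshold]
  · rw [firmThreshold, Real.sign_of_pos hy, abs_of_pos hy, one_mul]

lemma firmThreshold_of_le_inv (hlam : 0 ≤ lam) (ha : 0 < a) (hal : a * lam < 1)
    (hy : 0 ≤ y) (hya : y ≤ 1 / a) :
    firmThreshold lam a y = max ((y - lam) / (1 - a * lam)) 0 := by
  have hay : a * y ≤ 1 := by rwa [le_div_iff₀ ha, mul_comm] at hya
  rw [firmThreshold_of_nonneg hy, min_eq_right (max_le _ hy)]
  rw [div_le_iff₀ (by linarith)]
  nlinarith

lemma firmThreshold_of_inv_lt (hlam : 0 ≤ lam) (ha : 0 < a) (hal : a * lam < 1)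
    (hya : 1 / a < y) : firmThreshold lam a y = y := by
  have hay : 1 < a * y := by rwa [div_lt_iff₀ ha, mul_comm] at hya
  have hy : 0 ≤ y := by linarith [one_div_pos.mpr ha]
  rw [firmThreshold_of_nonneg hy, min_eq_left (le_max_of_le_left _)]
  rw [le_div_iff₀ (by linarith)]
  nlinarith

lemma abs_firmThreshold_le (lam a y : ℝ) : |firmThreshold lam a y| ≤ |y| := by
  rw [firmThreshold, abs_mul]
  have hsign : |Real.sign y| ≤ 1 := by
    rcases Real.sign_apply_eq y with h | h | h <;> simp [h]
  have hmin : |min |y| (max ((|y| - lam) / (1 - a * lam)) 0)| ≤ |y| := by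
    rw [abs_of_nonneg (le_min (abs_nonneg y) (le_max_right _ _))]
    exact min_le_left _ _
  exact (mul_le_of_le_one_left (abs_nonneg _) hsign).trans hmin

lemma firmThreshold_lt_mcpObjective_of_le_inv (hlam : 0 ≤ lam) (ha : 0 < a)
    (hal : a * lam < 1) (hy : 0 ≤ y) (hya : y ≤ 1 / a) (hx : x ≠ firmThreshold lam a y) :
    mcpObjective lam a y (firmThreshold lam a y) < mcpObjective lam a y x := by
  set T := firmThreshold lam a y
  have hT : |T| ≤ 1 / a := (abs_firmThreshold_le lam a y).trans (by rwa [abs_of_nonneg hy])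
  calc mcpObjective lam a y T = 1 / 2 * (y - T) ^ 2 + lam * (|T| - a / 2 * T ^ 2) := by
        rw [mcpObjective, mcpPenalty_of_abs_le hT]
    _ < 1 / 2 * (y - x) ^ 2 + lam * (|x| - a / 2 * x ^ 2) :=
        softThreshold_lt_minorant hlam hal hy (firmThreshold_of_le_inv hlam ha hal hy hya) hx
    _ ≤ mcpObjective lam a y x := by
        unfold mcpObjective
        gcongr
        exact abs_sub_le_mcpPenalty ha x

lemma mcpObjective_self_lt_of_inv_lt (ha : 0 < a) (hal : a * lam < 1)
    (hya : 1 / a < y) (hx : x ≠ y) : mcpObjective lam a y y < mcpObjective lam a y x := by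
  set m := max (1 / a - |x|) 0
  have hm : lam * a * m ^ 2 < (y - x) ^ 2 := by
    have hgap : 0 < (y - x) ^ 2 := by positivity [sub_ne_zero.mpr hx.symm]
    rcases le_total (1 / a - |x|) 0 with h | h
    · simp only [m, max_eq_right h]
      simpa using hgap
    · have hmx : m < y - x := by
        simp only [m, max_eq_left h]
        linarith [le_abs_self x]
      have hm0 : 0 ≤ m := le_max_right _ _
      nlinarith
  have hyy : mcpObjective lam a y y = lam * (1 / (2 * a)) := by
    have hy : 0 < y := (one_div_pos.mpr ha).trans hya
    rw [mcpObjective, mcpPenalty_eq_sub_sq ha, max_eq_right (by rw [abs_of_pos hy]; linarith)]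
    ring
  rw [hyy, mcpObjective, mcpPenalty_eq_sub_sq ha]
  nlinarith

lemma firmThreshold_lt_mcpObjective_of_nonneg (hlam : 0 ≤ lam) (ha : 0 < a)
    (hal : a * lam < 1) (hy : 0 ≤ y) (hx : x ≠ firmThreshold lam a y) :
    mcpObjective lam a y (firmThreshold lam a y) < mcpObjective lam a y x := by
  rcases le_or_gt y (1 / a) with hya | hya
  · exact firmThreshold_lt_mcpObjective_of_le_inv hlam ha hal hy hya hx
  · rw [firmThreshold_of_inv_lt hlam ha hal hya] at hx ⊢
    exact mcpObjective_self_lt_of_inv_lt ha hal hya hx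

theorem firmThreshold_lt_mcpObjective (hlam : 0 ≤ lam) (ha : 0 < a) (hal : a * lam < 1)
    (hx : x ≠ firmThreshold lam a y) :
    mcpObjective lam a y (firmThreshold lam a y) < mcpObjective lam a y x := by
  rcases le_total 0 y with hy | hy
  · exact firmThreshold_lt_mcpObjective_of_nonneg hlam ha hal hy hx
  · have hx' : -x ≠ firmThreshold lam a (-y) := by
      rwa [firmThreshold_neg, ne_eq, neg_inj]
    have := firmThreshold_lt_mcpObjective_of_nonneg hlam ha hal (neg_nonneg.mpr hy) hx'
    rwa [firmThreshold_neg, mcpObjective_neg_neg, mcpObjective_neg_neg] at this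

end

theorem stmt_11 (lam a : ℝ) (hlam : 0 < lam) (ha : 0 < a) (h : a < 1 / lam)
    (φ Θ : ℝ → ℝ)
    (hφ : ∀ x, φ x = if |x| ≤ 1 / a then |x| - a / 2 * x ^ 2 else 1 / (2 * a))
    (hΘ : ∀ y, Θ y = Real.sign y * min |y| (max ((|y| - lam) / (1 - a * lam)) 0)) :
    ∀ y x : ℝ, x ≠ Θ y →
      1 / 2 * (y - Θ y) ^ 2 + lam * φ (Θ y) < 1 / 2 * (y - x) ^ 2 + lam * φ x := by
  have hal : a * lam < 1 := (lt_div_iff₀ hlam).mp h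
  obtain rfl : φ = mcpPenalty a := funext hφ
  obtain rfl : Θ = firmThreshold lam a := funext hΘ
  exact fun y x hx => firmThreshold_lt_mcpObjective hlam.le ha hal hx
end

section
/- Von Neumann's trace inequality: for real n×n matrices A and B, tr(AᵀB) ≤ Σᵢ σᵢ(A)·σᵢ(B), where σᵢ denotes the singular values in nonincreasing order. -/
/-!
Write `A = U₁ Σ V₁ᵀ` and `B = U₂ T V₂ᵀ` (singular value decompositions). Then
`tr (Aᵀ B) = tr (Σ P T Q) = ∑ᵢⱼ σᵢ τⱼ Pᵢⱼ Qⱼᵢ` with `P = U₁ᵀ U₂` and `Q = V₂ᵀ V₁` orthogonal.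
By AM-GM, `Pᵢⱼ Qⱼᵢ ≤ Dᵢⱼ := (Pᵢⱼ² + Qⱼᵢ²) / 2`, and `D` is doubly stochastic since the squared
entries of an orthogonal matrix form one. By Birkhoff's theorem `D` is a convex combination of
permutation matrices, so `∑ᵢⱼ σᵢ τⱼ Dᵢⱼ ≤ max_π ∑ᵢ σᵢ τ_{π i}`, and by the rearrangement inequality
this maximum is the sum of products of the two sequences sorted in the same order.
-/

open Matrix

/-- Singular values of a real square matrix, in nonincreasing order. -/
noncomputable def svals {n : ℕ} (A : Matrix (Fin n) (Fin n) ℝ) : Fin n → ℝ :=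
  fun i =>
    let e : Fin n → ℝ := fun j => Real.sqrt ((Matrix.isHermitian_conjTranspose_mul_self A).eigenvalues j)
    (e ∘ Tuple.sort e) i.rev

open Finset

namespace Matrix

lemma vecMul_dotProduct_le_of_le {R m n : Type*} [Fintype m] [Fintype n] [Semiring R]
    [PartialOrder R] [IsOrderedRing R] {v : m → R} {w : n → R} (hv : 0 ≤ v) (hw : 0 ≤ w)
    {M N : Matrix m n R} (hMN : ∀ i j, M i j ≤ N i j) : v ᵥ* M ⬝ᵥ w ≤ v ᵥ* N ⬝ᵥ w := by
  simp only [dotProduct, vecMul]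
  gcongr with j _ i _
  · exact hw j
  · exact hv i
  · exact hMN i j

variable {ι : Type*} [Fintype ι] [DecidableEq ι]

lemma _root_.Monovary.vecMul_dotProduct_le {f g : ι → ℝ} (hfg : Monovary f g)
    {D : Matrix ι ι ℝ} (hD : D ∈ doublyStochastic ℝ ι) : f ᵥ* D ⬝ᵥ g ≤ f ⬝ᵥ g := by
  obtain ⟨w, hw0, hw1, rfl⟩ := exists_eq_sum_perm_of_mem_doublyStochastic hD
  calc f ᵥ* (∑ σ, w σ • σ.permMatrix ℝ) ⬝ᵥ g = ∑ σ, w σ * (f ∘ σ.symm ⬝ᵥ g) := by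
        simp [vecMul_sum, vecMul_smul, sum_dotProduct, vecMul_permMatrix]
    _ ≤ ∑ σ, w σ * (f ⬝ᵥ g) := by
        gcongr with σ
        · exact hw0 σ
        · exact hfg.sum_comp_perm_mul_le_sum_mul
    _ = f ⬝ᵥ g := by rw [← sum_mul, hw1, one_mul]

lemma hadamard_self_mem_doublyStochastic {U : Matrix ι ι ℝ} (hU : U ∈ orthogonalGroup ι ℝ) :
    U ⊙ U ∈ doublyStochastic ℝ ι := by
  rw [mem_doublyStochastic_iff_sum]
  refine ⟨fun i j => mul_self_nonneg _, fun i => ?_, fun j => ?_⟩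
  · simpa [mul_apply, one_apply] using congr_fun₂ ((mem_orthogonalGroup_iff ι ℝ).mp hU) i i
  · simpa [mul_apply, one_apply] using congr_fun₂ ((mem_orthogonalGroup_iff' ι ℝ).mp hU) j j

/- The columns `cᵢ` of `W` are orthogonal with `‖cᵢ‖ = |sᵢ|`; the normalized columns with
`sᵢ ≠ 0` extend to an orthonormal basis, whose vectors are the columns of `U`. -/
lemma exists_mem_orthogonalGroup_mul_diagonal_eq {W : Matrix ι ι ℝ} {s : ι → ℝ}
    (hW : Wᵀ * W = diagonal (fun i => s i ^ 2)) :
    ∃ U ∈ orthogonalGroup ι ℝ, U * diagonal s = W := by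
  set c : ι → EuclideanSpace ℝ ι := fun i => WithLp.toLp 2 (fun k => W k i)
  have hc : ∀ i j, inner ℝ (c i) (c j) = if i = j then s i ^ 2 else 0 := fun i j => by
    rw [← diagonal_apply (fun i => s i ^ 2), ← hW]
    simp [c, PiLp.inner_apply, mul_apply, mul_comm]
  have hu : Orthonormal ℝ ({i | s i ≠ 0}.domRestrict fun i => (s i)⁻¹ • c i) := by
    rw [orthonormal_iff_ite]
    rintro ⟨i, hi⟩ ⟨j, hj⟩
    simp only [Set.domRestrict_apply, real_inner_smul_left, real_inner_smul_right, hc,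
      Subtype.mk.injEq]
    split_ifs with hij
    · subst hij
      have : s i ≠ 0 := hi
      field_simp
    · simp
  obtain ⟨b, hb⟩ := hu.exists_orthonormalBasis_extension_of_card_eq (by simp)
  set U : Matrix ι ι ℝ := (EuclideanSpace.basisFun ι ℝ).toBasis.toMatrix b
  have hU : ∀ k i, U k i = b i k := fun k i => by simp [U, Module.Basis.toMatrix_apply]
  refine ⟨U, (EuclideanSpace.basisFun ι ℝ).toMatrix_orthonormalBasis_mem_unitary b, ?_⟩
  ext k i
  rw [mul_diagonal, hU]
  change _ = c i k
  by_cases hsi : s i = 0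
  · have hci : c i = 0 := inner_self_eq_zero.mp (by rw [hc, if_pos rfl, hsi]; ring)
    simp [hsi, hci]
  · rw [hb i hsi, PiLp.smul_apply, smul_eq_mul]
    field_simp

lemma exists_svd (A : Matrix ι ι ℝ) :
    ∃ U ∈ orthogonalGroup ι ℝ, ∃ V ∈ orthogonalGroup ι ℝ, A =
      U * diagonal (fun i => √((isHermitian_conjTranspose_mul_self A).eigenvalues i)) * Vᵀ := by
  set hA := isHermitian_conjTranspose_mul_self A
  set V : Matrix ι ι ℝ := (hA.eigenvectorUnitary : Matrix ι ι ℝ)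
  have hV : V ∈ orthogonalGroup ι ℝ := hA.eigenvectorUnitary.2
  have hAV : (A * V)ᵀ * (A * V) = diagonal (fun i => √(hA.eigenvalues i) ^ 2) := by
    have hdiag := hA.conjStarAlgAut_star_eigenvectorUnitary
    rw [Unitary.conjStarAlgAut_star_apply] at hdiag
    calc (A * V)ᵀ * (A * V) = star V * (Aᴴ * A) * V := by
          simp only [transpose_mul, star_eq_conjTranspose, conjTranspose_eq_transpose_of_trivial,
            Matrix.mul_assoc]
      _ = diagonal hA.eigenvalues := hdiag
      _ = diagonal (fun i => √(hA.eigenvalues i) ^ 2) := by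
          simp only [Real.sq_sqrt (eigenvalues_conjTranspose_mul_self_nonneg A _)]
  obtain ⟨U, hU, hUV⟩ := exists_mem_orthogonalGroup_mul_diagonal_eq hAV
  refine ⟨U, hU, V, hV, ?_⟩
  rw [hUV, Matrix.mul_assoc, (mem_orthogonalGroup_iff ι ℝ).mp hV, Matrix.mul_one]

end Matrix

section SortDesc

variable {n : ℕ}

def sortDesc {α : Type*} [LinearOrder α] (f : Fin n → α) : Fin n → α :=
  f ∘ Tuple.sort f ∘ Fin.rev

lemma antitone_sortDesc {α : Type*} [LinearOrder α] (f : Fin n → α) : Antitone (sortDesc f) :=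
  (Tuple.monotone_sort f).comp_antitone Fin.rev_anti

lemma sortDesc_comp_symm_sort_trans_revPerm {α : Type*} [LinearOrder α] (f : Fin n → α) :
    sortDesc f ∘ ((Tuple.sort f).symm.trans Fin.revPerm) = f := by
  ext x
  simp [sortDesc]

lemma vecMul_dotProduct_le_sortDesc {f g : Fin n → ℝ} {D : Matrix (Fin n) (Fin n) ℝ}
    (hD : D ∈ doublyStochastic ℝ (Fin n)) : f ᵥ* D ⬝ᵥ g ≤ sortDesc f ⬝ᵥ sortDesc g := by
  set e := (Tuple.sort f).symm.trans Fin.revPerm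
  set e' := (Tuple.sort g).symm.trans Fin.revPerm
  calc f ᵥ* D ⬝ᵥ g = sortDesc f ᵥ* reindex e e' D ⬝ᵥ sortDesc g := by
        rw [reindex_apply, submatrix_vecMul_equiv, comp_equiv_symm_dotProduct, Equiv.symm_symm,
          sortDesc_comp_symm_sort_trans_revPerm, sortDesc_comp_symm_sort_trans_revPerm]
    _ ≤ sortDesc f ⬝ᵥ sortDesc g :=
        ((antitone_sortDesc f).monovary (antitone_sortDesc g)).vecMul_dotProduct_le
          (reindex_mem_doublyStochastic hD)

lemma trace_diagonal_mul_mul_diagonal_mul_le {P Q : Matrix (Fin n) (Fin n) ℝ}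
    (hP : P ∈ orthogonalGroup (Fin n) ℝ) (hQ : Q ∈ orthogonalGroup (Fin n) ℝ)
    {d d' : Fin n → ℝ} (hd : 0 ≤ d) (hd' : 0 ≤ d') :
    trace (diagonal d * P * diagonal d' * Q) ≤ sortDesc d ⬝ᵥ sortDesc d' := by
  set D := (1 / 2 : ℝ) • (P ⊙ P) + (1 / 2 : ℝ) • (Qᵀ ⊙ Qᵀ)
  have hD : D ∈ doublyStochastic ℝ (Fin n) :=
    convex_doublyStochastic (hadamard_self_mem_doublyStochastic hP)
      (hadamard_self_mem_doublyStochastic (transpose_mem_unitaryGroup_iff.mpr hQ))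
      (by norm_num) (by norm_num) (by norm_num)
  have hPQ : ∀ i j, (P ⊙ Qᵀ) i j ≤ D i j := fun i j => by
    simp only [D, Matrix.add_apply, Matrix.smul_apply, hadamard_apply, transpose_apply,
      smul_eq_mul]
    nlinarith [sq_nonneg (P i j - Q j i)]
  calc trace (diagonal d * P * diagonal d' * Q) = d ᵥ* (P ⊙ Qᵀ) ⬝ᵥ d' := by
        rw [dotProduct_vecMul_hadamard, transpose_mul, transpose_transpose, diagonal_transpose,
          Matrix.mul_assoc]
    _ ≤ d ᵥ* D ⬝ᵥ d' := vecMul_dotProduct_le_of_le hd hd' hPQ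
    _ ≤ sortDesc d ⬝ᵥ sortDesc d' := vecMul_dotProduct_le_sortDesc hD

end SortDesc

theorem stmt_16 (n : ℕ) (A B : Matrix (Fin n) (Fin n) ℝ) :
    (Aᵀ * B).trace ≤ ∑ i, svals A i * svals B i := by
  obtain ⟨U₁, hU₁, V₁, hV₁, hA⟩ := exists_svd A
  obtain ⟨U₂, hU₂, V₂, hV₂, hB⟩ := exists_svd B
  set σ := fun i => √((isHermitian_conjTranspose_mul_self A).eigenvalues i)
  set τ := fun i => √((isHermitian_conjTranspose_mul_self B).eigenvalues i)
  have htrace : (Aᵀ * B).trace = trace (diagonal σ * (U₁ᵀ * U₂) * diagonal τ * (V₂ᵀ * V₁)) := by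
    rw [hA, hB]
    simp only [transpose_mul, transpose_transpose, diagonal_transpose, Matrix.mul_assoc]
    rw [trace_mul_comm V₁]
    simp only [Matrix.mul_assoc]
  have hsvals : ∑ i, svals A i * svals B i = sortDesc σ ⬝ᵥ sortDesc τ := rfl
  rw [htrace, hsvals]
  exact trace_diagonal_mul_mul_diagonal_mul_le
    (mul_mem (transpose_mem_unitaryGroup_iff.mpr hU₁) hU₂)
    (mul_mem (transpose_mem_unitaryGroup_iff.mpr hV₂) hV₁)
    (fun _ => Real.sqrt_nonneg _) (fun _ => Real.sqrt_nonneg _)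
end
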